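/- Event-study identification (Remark 3): under Assumptions SO, NA, and DDD-CPT, for any integer e ≥ 0 with P(G + e ∈ [2,T]) > 0 and any selection g ↦ g_c(g) ∈ 𝒮 with g_c(g) > g + e for each g ∈ 𝒢_trt with g + e ≤ T, the event-study parameter ES(e) = E[ATT(G, G+e) | G + e ∈ [2,T]] satisfies ES(e) = Σ_{g ∈ 𝒢_trt, g+e ≤ T} P(G = g | G + e ∈ [2,T]) · ATT_dr,g_c(g)(g, g+e). -/

import Mathlib

open MeasureTheory ProbabilityTheory

namespace TripleDiff

/-- A staggered triple-differences (DDD) setup: a probability space carrying an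
enabling-group variable `S` with values in a finite set `𝒮 ⊆ {2,…,T} ∪ {∞}`
(`∞` is coded as `⊤ : ℕ∞`), an eligibility indicator `Q ∈ {0,1}`, covariates
`X ∈ ℝ^d`, and integrable potential outcomes `Y_t(g)`, with every cell
`{S = g, Q = q}` having positive probability. -/
structure Setup (Ω : Type*) [MeasurableSpace Ω] (d : ℕ) where
  /-- the underlying probability measure -/
  μ : Measure Ω
  isProb : IsProbabilityMeasure μ
  /-- the number of time periods -/
  T : ℕ
  hT : 2 ≤ T
  /-- the (finite) support of the enabling variable -/
  𝒮 : Finset ℕ∞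
  h𝒮 : ∀ g ∈ 𝒮, g ≠ ⊤ → ∃ n : ℕ, 2 ≤ n ∧ n ≤ T ∧ g = (n : ℕ∞)
  htop : (⊤ : ℕ∞) ∈ 𝒮
  /-- enabling group: first period at which treatment is enabled -/
  S : Ω → ℕ∞
  hS : Measurable S
  hSmem : ∀ ω, S ω ∈ 𝒮
  /-- eligibility indicator -/
  Q : Ω → ℕ
  hQ : Measurable Q
  hQval : ∀ ω, Q ω ≤ 1
  /-- covariates -/
  X : Ω → Fin d → ℝ
  hX : Measurable X
  /-- potential outcomes `Y_t(g)` -/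
  Ypo : ℕ∞ → ℕ → Ω → ℝ
  hYpo : ∀ g ∈ 𝒮, ∀ t : ℕ, 1 ≤ t → t ≤ T → Integrable (Ypo g t) μ
  hcells : ∀ g ∈ 𝒮, ∀ q ≤ 1, 0 < μ {ω | S ω = g ∧ Q ω = q}

namespace Setup

variable {Ω : Type*} [MeasurableSpace Ω] {d : ℕ} (E : Setup Ω d)

/-- the cell `{S = g, Q = q}` -/
def cell (g : ℕ∞) (q : ℕ) : Set Ω := {ω | E.S ω = g ∧ E.Q ω = q}

/-- first treatment period: `G = S` if `Q = 1` and `G = ∞` if `Q = 0` -/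
def G (ω : Ω) : ℕ∞ := if E.Q ω = 1 then E.S ω else ⊤

/-- observed outcome `Y_t = Σ_g 1{G = g} Y_t(g)` -/
def Yobs (t : ℕ) (ω : Ω) : ℝ := E.Ypo (E.G ω) t ω

/-- the σ-algebra generated by the covariates `X` -/
def mX : MeasurableSpace Ω := MeasurableSpace.comap E.X inferInstance

/-- conditional cell probability `P(S = g, Q = q | X)` given `σ(X)` -/
noncomputable def pX (g : ℕ∞) (q : ℕ) : Ω → ℝ :=
  (E.μ)[(E.cell g q).indicator (fun _ => (1 : ℝ)) | E.mX]

/-- group-time average treatment effect `ATT(g,t) = E[Y_t(g) − Y_t(∞) | S = g, Q = 1]` -/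
noncomputable def ATT (g t : ℕ) : ℝ :=
  ∫ ω, (E.Ypo (g : ℕ∞) t ω - E.Ypo ⊤ t ω) ∂((E.μ)[|E.cell (g : ℕ∞) 1])

/-- outcome-regression nuisance `m^{g',q'}(X) = E[Y_t − Y_{g−1} | S = g', Q = q', X]`,
for the fixed pair `(g,t)` -/
noncomputable def mReg (g t : ℕ) (g' : ℕ∞) (q' : ℕ) : Ω → ℝ :=
  ((E.μ)[|E.cell g' q'])[fun ω => E.Yobs t ω - E.Yobs (g - 1) ω | E.mX]

/-- treated weight `w_trt = 1{S = g, Q = 1} / E[1{S = g, Q = 1}]` -/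
noncomputable def wTrt (g : ℕ) : Ω → ℝ := fun ω =>
  (E.cell (g : ℕ∞) 1).indicator (fun _ => (1 : ℝ)) ω / (E.μ (E.cell (g : ℕ∞) 1)).toReal

/-- unnormalized comparison (odds) weight `1{S = g', Q = q'}·p^{g,1}(X)/p^{g',q'}(X)` -/
noncomputable def oddsW (g : ℕ) (g' : ℕ∞) (q' : ℕ) : Ω → ℝ := fun ω =>
  (E.cell g' q').indicator (fun _ => (1 : ℝ)) ω * E.pX (g : ℕ∞) 1 ω / E.pX g' q' ω

/-- normalized comparison weight `w_{g',q'}` -/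
noncomputable def wComp (g : ℕ) (g' : ℕ∞) (q' : ℕ) : Ω → ℝ := fun ω =>
  E.oddsW g g' q' ω / ∫ ω', E.oddsW g g' q' ω' ∂E.μ

/-- doubly robust DDD estimand `ATT_dr,g_c(g,t)` with comparison group `g_c` -/
noncomputable def ATTdr (g t : ℕ) (gc : ℕ∞) : ℝ :=
  (∫ ω, (E.wTrt g ω - E.wComp g (g : ℕ∞) 0 ω) *
      (E.Yobs t ω - E.Yobs (g - 1) ω - E.mReg g t (g : ℕ∞) 0 ω) ∂E.μ)
  + (∫ ω, (E.wTrt g ω - E.wComp g gc 1 ω) *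
      (E.Yobs t ω - E.Yobs (g - 1) ω - E.mReg g t gc 1 ω) ∂E.μ)
  - (∫ ω, (E.wTrt g ω - E.wComp g gc 0 ω) *
      (E.Yobs t ω - E.Yobs (g - 1) ω - E.mReg g t gc 0 ω) ∂E.μ)

/-- Assumption SO (strong overlap): there is `ε > 0` with
`P(S = g, Q = q | X) > ε` a.s. for every cell. -/
def StrongOverlap : Prop :=
  ∃ ε > (0 : ℝ), ∀ g ∈ E.𝒮, ∀ q ≤ 1, ∀ᵐ ω ∂E.μ, ε < E.pX g q ω

/-- Assumption NA (no anticipation): for every treated group `g` and every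
pre-treatment period `t < g`,
`E[Y_t(g) | S = g, Q = 1, X] = E[Y_t(∞) | S = g, Q = 1, X]` a.s. -/
def NoAnticipation : Prop :=
  ∀ g : ℕ, (g : ℕ∞) ∈ E.𝒮 → ∀ t : ℕ, 1 ≤ t → t < g →
    ((E.μ)[|E.cell (g : ℕ∞) 1])[E.Ypo (g : ℕ∞) t | E.mX]
      =ᵐ[E.μ] ((E.μ)[|E.cell (g : ℕ∞) 1])[E.Ypo ⊤ t | E.mX]

/-- Assumption DDD-CPT (conditional DDD parallel trends): for each treated group
`g`, each `g' ∈ 𝒮` and period `t` with `t ≥ g` and `g' > max{g,t}`, a.s.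
`E[ΔY_t(∞)|S=g,Q=1,X] − E[ΔY_t(∞)|S=g,Q=0,X]
  = E[ΔY_t(∞)|S=g',Q=1,X] − E[ΔY_t(∞)|S=g',Q=0,X]`. -/
def ParallelTrends : Prop :=
  ∀ g : ℕ, (g : ℕ∞) ∈ E.𝒮 → ∀ g' ∈ E.𝒮, ∀ t : ℕ, g ≤ t → t ≤ E.T →
    max (g : ℕ∞) (t : ℕ∞) < g' →
    (fun ω =>
        (((E.μ)[|E.cell (g : ℕ∞) 1])[fun ω' => E.Ypo ⊤ t ω' - E.Ypo ⊤ (t - 1) ω' | E.mX]) ω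
          - (((E.μ)[|E.cell (g : ℕ∞) 0])[fun ω' => E.Ypo ⊤ t ω' - E.Ypo ⊤ (t - 1) ω' | E.mX]) ω)
      =ᵐ[E.μ]
    (fun ω =>
        (((E.μ)[|E.cell g' 1])[fun ω' => E.Ypo ⊤ t ω' - E.Ypo ⊤ (t - 1) ω' | E.mX]) ω
          - (((E.μ)[|E.cell g' 0])[fun ω' => E.Ypo ⊤ t ω' - E.Ypo ⊤ (t - 1) ω' | E.mX]) ω)

end Setup

end TripleDiff

open TripleDiff

namespace TripleDiff.Setup
section Aux
open MeasureTheory ProbabilityTheory Filter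
variable {Ω : Type*} [MeasurableSpace Ω] {d : ℕ} (E : Setup Ω d)

lemma meas_cell (g : ℕ∞) (q : ℕ) : MeasurableSet (E.cell g q) := by
  have : E.cell g q = E.S ⁻¹' {g} ∩ E.Q ⁻¹' {q} := by
    ext ω; simp [Setup.cell, Set.mem_inter_iff]
  rw [this]
  exact (E.hS (measurableSet_singleton g)).inter (E.hQ (measurableSet_singleton q))

lemma measurable_G : Measurable E.G := by
  unfold Setup.G
  exact Measurable.ite (E.hQ (measurableSet_singleton 1)) E.hS measurable_const

lemma hm_le : E.mX ≤ ‹MeasurableSpace Ω› := E.hX.comap_le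

lemma cell_pos (g : ℕ∞) (hg : g ∈ E.𝒮) (q : ℕ) (hq : q ≤ 1) : 0 < E.μ (E.cell g q) :=
  E.hcells g hg q hq

lemma cond_prob (g : ℕ∞) (hg : g ∈ E.𝒮) (q : ℕ) (hq : q ≤ 1) :
    IsProbabilityMeasure (E.μ[|E.cell g q]) := by
  haveI := E.isProb
  exact cond_isProbabilityMeasure (E.cell_pos g hg q hq).ne'

lemma ae_cond {A : Set Ω} (p : Ω → Prop) (h : ∀ᵐ ω ∂E.μ, p ω) : ∀ᵐ ω ∂(E.μ[|A]), p ω :=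
  cond_absolutelyContinuous.ae_le h

lemma ae_cond_mem {A : Set Ω} (hA : MeasurableSet A) : ∀ᵐ ω ∂(E.μ[|A]), ω ∈ A := by
  rw [ae_iff]
  have : {ω | ¬ ω ∈ A} = Aᶜ := rfl
  rw [this, ProbabilityTheory.cond, Measure.smul_apply, Measure.restrict_apply hA.compl]
  simp

lemma integrable_cond {A : Set Ω} {f : Ω → ℝ} (hf : Integrable f E.μ) (hA : E.μ A ≠ 0) :
    Integrable f (E.μ[|A]) := by
  haveI := E.isProb
  rw [ProbabilityTheory.cond]
  exact (hf.restrict).smul_measure (ENNReal.inv_ne_top.mpr hA)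

lemma integrable_Yobs (t : ℕ) (ht1 : 1 ≤ t) (htT : t ≤ E.T) : Integrable (E.Yobs t) E.μ := by
  have hrw : E.Yobs t = fun ω => ∑ g ∈ E.𝒮, ({ω' | E.G ω' = g}).indicator (E.Ypo g t) ω := by
    funext ω
    have hGmem : E.G ω ∈ E.𝒮 := by
      unfold Setup.G; split
      · exact E.hSmem ω
      · exact E.htop
    rw [Finset.sum_eq_single_of_mem (E.G ω) hGmem]
    · simp [Set.indicator_apply, Setup.Yobs]
    · intro b _ hb
      simp [Set.indicator_apply, hb]
      intro hc; exact absurd hc (by simpa [eq_comm] using hb)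
  rw [hrw]
  refine integrable_finset_sum _ (fun g hg => ?_)
  exact (E.hYpo g hg t ht1 htT).indicator (E.measurable_G (measurableSet_singleton g))

end Aux
end TripleDiff.Setup
namespace TripleDiff.Setup
section Aux2
open MeasureTheory ProbabilityTheory Filter
variable {Ω : Type*} [MeasurableSpace Ω] {d : ℕ} (E : Setup Ω d)

lemma integrable_cell_indicator (g : ℕ∞) (q : ℕ) :
    Integrable ((E.cell g q).indicator (fun _ => (1:ℝ))) E.μ := by
  haveI := E.isProb
  exact (integrable_const 1).indicator (E.meas_cell g q)

lemma pX_le_one (g : ℕ∞) (q : ℕ) : ∀ᵐ ω ∂E.μ, E.pX g q ω ≤ 1 := by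
  haveI := E.isProb
  have h := condExp_mono (m := E.mX) (μ := E.μ) (E.integrable_cell_indicator g q)
    (integrable_const (1:ℝ))
    (Filter.Eventually.of_forall (fun ω => Set.indicator_le_self' (fun _ _ => zero_le_one) ω))
  rw [condExp_const (E.hm_le) (1:ℝ)] at h
  exact h

lemma pX_stronglyMeasurable (g : ℕ∞) (q : ℕ) : StronglyMeasurable[E.mX] (E.pX g q) :=
  stronglyMeasurable_condExp

/-- key overlap-based null-transfer: an `mX`-measurable set that is null in a cell is null. -/
lemma null_of_cell_null (hSO : E.StrongOverlap) {g : ℕ∞} (hg : g ∈ E.𝒮) {q : ℕ} (hq : q ≤ 1)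
    {B : Set Ω} (hB : MeasurableSet[E.mX] B) (hBA : E.μ (B ∩ E.cell g q) = 0) :
    E.μ B = 0 := by
  haveI := E.isProb
  obtain ⟨ε, hε, hp⟩ := hSO
  have hm := E.hm_le
  have hBm : MeasurableSet B := hm _ hB
  have h1 : ∫ ω in B, E.pX g q ω ∂E.μ = ∫ ω in B, (E.cell g q).indicator (fun _ => (1:ℝ)) ω ∂E.μ :=
    setIntegral_condExp hm (E.integrable_cell_indicator g q) hB
  have h2 : ∫ ω in B, (E.cell g q).indicator (fun _ => (1:ℝ)) ω ∂E.μ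
      = (E.μ (E.cell g q ∩ B)).toReal := by
    rw [setIntegral_indicator (E.meas_cell g q)]
    simp [Measure.restrict_apply_univ]
    rw [Set.inter_comm]; rfl
  have h3 : E.μ (E.cell g q ∩ B) = 0 := by
    rw [Set.inter_comm]; exact hBA
  have h4 : ε * (E.μ B).toReal ≤ ∫ ω in B, E.pX g q ω ∂E.μ := by
    have hmono := setIntegral_mono_ae_restrict (μ := E.μ) (s := B)
      (integrableOn_const (measure_ne_top _ _))
      (integrable_condExp.integrableOn)
      (ae_restrict_of_ae ((hp g hg q hq).mono (fun ω h => le_of_lt h)))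
    calc ε * (E.μ B).toReal = ∫ _ω in B, ε ∂E.μ := by rw [setIntegral_const]; rw [smul_eq_mul, measureReal_def]; ring
    _ ≤ _ := hmono
  rw [h1, h2, h3] at h4
  simp only [ENNReal.toReal_zero] at h4
  have : (E.μ B).toReal = 0 := by nlinarith [ENNReal.toReal_nonneg (a := E.μ B)]
  exact (ENNReal.toReal_eq_zero_iff _).mp this |>.resolve_right (measure_ne_top _ _)

/-- transfer a.e.-equality on a cell to a.e.-equality under `μ`, for `mX`-measurable functions -/
lemma ae_of_cell_ae (hSO : E.StrongOverlap) {g : ℕ∞} (hg : g ∈ E.𝒮) {q : ℕ} (hq : q ≤ 1)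
    {f h : Ω → ℝ} (hf : StronglyMeasurable[E.mX] f) (hh : StronglyMeasurable[E.mX] h)
    (hfh : f =ᵐ[E.μ[|E.cell g q]] h) : f =ᵐ[E.μ] h := by
  haveI := E.isProb
  have hB : MeasurableSet[E.mX] {ω | ¬ f ω = h ω} :=
    (measurableSet_eq_fun hf.measurable hh.measurable).compl
  have h0 : (E.μ[|E.cell g q]) {ω | ¬ f ω = h ω} = 0 := hfh
  rw [ProbabilityTheory.cond, Measure.smul_apply,
    Measure.restrict_apply (E.hm_le _ hB)] at h0
  have hinv : (E.μ (E.cell g q))⁻¹ ≠ 0 := by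
    simp [ENNReal.inv_ne_zero]
  have hnull : E.μ ({ω | ¬ f ω = h ω} ∩ E.cell g q) = 0 := by
    rcases (by rw [smul_eq_mul] at h0; exact mul_eq_zero.mp h0) with h' | h'
    · exact absurd h' hinv
    · exact h'
  exact E.null_of_cell_null hSO hg hq hB hnull

end Aux2
end TripleDiff.Setup
namespace TripleDiff.Setup
section Aux3
open MeasureTheory ProbabilityTheory Filter
open scoped ENNReal NNReal
variable {Ω : Type*} [MeasurableSpace Ω] {d : ℕ} (E : Setup Ω d)

/-- overlap-based comparison: `μ B ≤ C * cond-measure of B` on `mX`-sets. -/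
lemma mu_le_cond (hSO : E.StrongOverlap) {g : ℕ∞} (hg : g ∈ E.𝒮) {q : ℕ} (hq : q ≤ 1) :
    ∃ C : ℝ≥0∞, C ≠ ⊤ ∧ ∀ B : Set Ω, MeasurableSet[E.mX] B →
      E.μ B ≤ C * (E.μ[|E.cell g q]) B := by
  haveI := E.isProb
  obtain ⟨ε, hε, hp⟩ := hSO
  have hm := E.hm_le
  refine ⟨ENNReal.ofReal ε⁻¹ * E.μ (E.cell g q), by finiteness, fun B hB => ?_⟩
  have hBm : MeasurableSet B := hm _ hB
  have h1 : ∫ ω in B, E.pX g q ω ∂E.μ = (E.μ (E.cell g q ∩ B)).toReal := by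
    unfold Setup.pX
    rw [setIntegral_condExp hm (E.integrable_cell_indicator g q) hB,
      setIntegral_indicator (E.meas_cell g q)]
    simp
    rw [Set.inter_comm]; rfl
  have h4 : ε * (E.μ B).toReal ≤ (E.μ (E.cell g q ∩ B)).toReal := by
    rw [← h1]
    have hmono := setIntegral_mono_ae_restrict (μ := E.μ) (s := B)
      (integrableOn_const (measure_ne_top _ _))
      (integrable_condExp.integrableOn)
      (ae_restrict_of_ae ((hp g hg q hq).mono (fun ω h => le_of_lt h)))
    calc ε * (E.μ B).toReal = ∫ _ω in B, ε ∂E.μ := by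
          rw [setIntegral_const, smul_eq_mul, measureReal_def]; ring
    _ ≤ _ := hmono
  have hcond : (E.μ[|E.cell g q]) B = (E.μ (E.cell g q))⁻¹ * E.μ (E.cell g q ∩ B) := by
    rw [ProbabilityTheory.cond, Measure.smul_apply, Measure.restrict_apply hBm,
      Set.inter_comm, smul_eq_mul]
  have key : E.μ B ≤ ENNReal.ofReal ε⁻¹ * E.μ (E.cell g q ∩ B) := by
    have hμB : E.μ B = ENNReal.ofReal (E.μ B).toReal :=
      (ENNReal.ofReal_toReal (measure_ne_top _ _)).symm
    have hμI : E.μ (E.cell g q ∩ B) = ENNReal.ofReal (E.μ (E.cell g q ∩ B)).toReal :=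
      (ENNReal.ofReal_toReal (measure_ne_top _ _)).symm
    rw [hμB, hμI, ← ENNReal.ofReal_mul (by positivity)]
    apply ENNReal.ofReal_le_ofReal
    calc (E.μ B).toReal = ε⁻¹ * (ε * (E.μ B).toReal) := by field_simp
    _ ≤ ε⁻¹ * (E.μ (E.cell g q ∩ B)).toReal :=
        mul_le_mul_of_nonneg_left h4 (by positivity)
  rw [hcond]
  calc E.μ B ≤ ENNReal.ofReal ε⁻¹ * E.μ (E.cell g q ∩ B) := key
  _ = ENNReal.ofReal ε⁻¹ * (E.μ (E.cell g q) * ((E.μ (E.cell g q))⁻¹ * E.μ (E.cell g q ∩ B))) := by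
      rw [← mul_assoc (E.μ (E.cell g q)),
        ENNReal.mul_inv_cancel (E.cell_pos g hg q hq).ne' (measure_ne_top _ _), one_mul]
  _ = ENNReal.ofReal ε⁻¹ * E.μ (E.cell g q) * ((E.μ (E.cell g q))⁻¹ * E.μ (E.cell g q ∩ B)) := by
      ring

/-- an `mX`-strongly-measurable function integrable on a cell is integrable w.r.t. `μ`. -/
lemma integrable_of_cell_integrable (hSO : E.StrongOverlap) {g : ℕ∞} (hg : g ∈ E.𝒮)
    {q : ℕ} (hq : q ≤ 1) {f : Ω → ℝ} (hfm : StronglyMeasurable[E.mX] f)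
    (hf : Integrable f (E.μ[|E.cell g q])) : Integrable f E.μ := by
  haveI := E.isProb
  have hm := E.hm_le
  obtain ⟨C, hC, hle⟩ := E.mu_le_cond hSO hg hq
  refine ⟨(hfm.mono hm).aestronglyMeasurable, ?_⟩
  have hnn : Measurable[E.mX] fun ω => (‖f ω‖₊ : ℝ≥0∞) := hfm.enorm
  have htrim1 : ∫⁻ ω, ‖f ω‖₊ ∂E.μ = ∫⁻ ω, ‖f ω‖₊ ∂(E.μ.trim hm) := (lintegral_trim hm hnn).symm
  have htrim2 : ∫⁻ ω, ‖f ω‖₊ ∂(E.μ[|E.cell g q]) = ∫⁻ ω, ‖f ω‖₊ ∂((E.μ[|E.cell g q]).trim hm) :=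
    (lintegral_trim hm hnn).symm
  have hmeas_le : E.μ.trim hm ≤ C • ((E.μ[|E.cell g q]).trim hm) := by
    refine Measure.le_intro (fun B hB _ => ?_)
    rw [trim_measurableSet_eq hm hB, Measure.smul_apply, trim_measurableSet_eq hm hB, smul_eq_mul]
    exact hle B hB
  rw [HasFiniteIntegral]
  change ∫⁻ ω, (‖f ω‖₊ : ℝ≥0∞) ∂E.μ < ⊤
  rw [htrim1]
  calc ∫⁻ ω, ‖f ω‖₊ ∂(E.μ.trim hm) ≤ ∫⁻ ω, ‖f ω‖₊ ∂(C • ((E.μ[|E.cell g q]).trim hm)) :=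
        lintegral_mono' hmeas_le (le_refl _)
  _ = C * ∫⁻ ω, ‖f ω‖₊ ∂((E.μ[|E.cell g q]).trim hm) := by rw [lintegral_smul_measure, smul_eq_mul]
  _ < ⊤ := by
      rw [← htrim2]
      exact ENNReal.mul_lt_top hC.lt_top hf.2

end Aux3
end TripleDiff.Setup
namespace TripleDiff.Setup
section Aux4
open MeasureTheory ProbabilityTheory Filter
open scoped ENNReal NNReal
variable {Ω : Type*} [MeasurableSpace Ω] {d : ℕ} (E : Setup Ω d)

lemma measurable_oddsW (g : ℕ) (g' : ℕ∞) (q' : ℕ) : Measurable (E.oddsW g g' q') := by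
  have m1 : Measurable ((E.cell g' q').indicator (fun _ => (1:ℝ))) :=
    measurable_const.indicator (E.meas_cell g' q')
  have m2 : Measurable (E.pX (g:ℕ∞) 1) :=
    (stronglyMeasurable_condExp.mono E.hm_le).measurable
  have m3 : Measurable (E.pX g' q') :=
    (stronglyMeasurable_condExp.mono E.hm_le).measurable
  exact (m1.mul m2).div m3

lemma oddsW_bounds (hSO : E.StrongOverlap) {g : ℕ} (hg : (g:ℕ∞) ∈ E.𝒮)
    {g' : ℕ∞} (hg' : g' ∈ E.𝒮) {q' : ℕ} (hq' : q' ≤ 1) :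
    ∃ ε : ℝ, 0 < ε ∧ ∀ᵐ ω ∂E.μ,
      ε * (E.cell g' q').indicator (fun _ => (1:ℝ)) ω ≤ E.oddsW g g' q' ω
        ∧ E.oddsW g g' q' ω ≤ ε⁻¹
        ∧ ε < E.pX (g:ℕ∞) 1 ω ∧ ε < E.pX g' q' ω := by
  obtain ⟨ε, hε, hp⟩ := hSO
  refine ⟨ε, hε, ?_⟩
  filter_upwards [hp (g:ℕ∞) hg 1 le_rfl, hp g' hg' q' hq', E.pX_le_one (g:ℕ∞) 1,
    E.pX_le_one g' q'] with ω h1 h2 h3 h4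
  have hεinv : (0:ℝ) < ε⁻¹ := inv_pos.mpr hε
  refine ⟨?_, ?_, h1, h2⟩
  · by_cases hω : ω ∈ E.cell g' q'
    · simp only [Setup.oddsW, Set.indicator_of_mem hω, one_mul, mul_one]
      rw [le_div_iff₀ (by linarith : (0:ℝ) < E.pX g' q' ω)]
      nlinarith
    · simp only [Setup.oddsW, Set.indicator_of_notMem hω, mul_zero, zero_mul, zero_div]
      norm_num
  · by_cases hω : ω ∈ E.cell g' q'
    · simp only [Setup.oddsW, Set.indicator_of_mem hω, one_mul]
      rw [div_le_iff₀ (by linarith : (0:ℝ) < E.pX g' q' ω)]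
      have h5 : ε * ε⁻¹ = 1 := mul_inv_cancel₀ hε.ne'
      nlinarith
    · simp only [Setup.oddsW, Set.indicator_of_notMem hω, zero_mul, zero_div]
      positivity

lemma integrable_oddsW (hSO : E.StrongOverlap) {g : ℕ} (hg : (g:ℕ∞) ∈ E.𝒮)
    {g' : ℕ∞} (hg' : g' ∈ E.𝒮) {q' : ℕ} (hq' : q' ≤ 1) :
    Integrable (E.oddsW g g' q') E.μ := by
  haveI := E.isProb
  obtain ⟨ε, hε, hb⟩ := E.oddsW_bounds hSO hg hg' hq'
  refine Integrable.mono' (integrable_const ε⁻¹) (E.measurable_oddsW g g' q').aestronglyMeasurable ?_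
  filter_upwards [hb] with ω ⟨hlo, hhi, _, _⟩
  rw [Real.norm_eq_abs, abs_le]
  constructor
  · have h0 : (0:ℝ) ≤ ε * (E.cell g' q').indicator (fun _ => (1:ℝ)) ω := by
      by_cases hω : ω ∈ E.cell g' q'
      · rw [Set.indicator_of_mem hω]; positivity
      · rw [Set.indicator_of_notMem hω]; simp
    have := h0.trans hlo
    linarith [inv_pos.mpr hε]
  · exact hhi

lemma oddsW_integral_pos (hSO : E.StrongOverlap) {g : ℕ} (hg : (g:ℕ∞) ∈ E.𝒮)
    {g' : ℕ∞} (hg' : g' ∈ E.𝒮) {q' : ℕ} (hq' : q' ≤ 1) :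
    0 < ∫ ω, E.oddsW g g' q' ω ∂E.μ := by
  haveI := E.isProb
  obtain ⟨ε, hε, hb⟩ := E.oddsW_bounds hSO hg hg' hq'
  have hlow : ∫ ω, ε * (E.cell g' q').indicator (fun _ => (1:ℝ)) ω ∂E.μ
      ≤ ∫ ω, E.oddsW g g' q' ω ∂E.μ := by
    refine integral_mono_ae ((E.integrable_cell_indicator g' q').const_mul ε)
      (E.integrable_oddsW hSO hg hg' hq') ?_
    filter_upwards [hb] with ω h
    exact h.1
  have hval : ∫ ω, ε * (E.cell g' q').indicator (fun _ => (1:ℝ)) ω ∂E.μ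
      = ε * (E.μ (E.cell g' q')).toReal := by
    rw [integral_const_mul, integral_indicator_const (1:ℝ) (E.meas_cell g' q'), smul_eq_mul, mul_one, measureReal_def]
  have hpos : 0 < ε * (E.μ (E.cell g' q')).toReal := by
    apply mul_pos hε
    exact ENNReal.toReal_pos (E.cell_pos g' hg' q' hq').ne' (measure_ne_top _ _)
  linarith [hlow, hval ▸ hlow]

end Aux4
end TripleDiff.Setup
namespace TripleDiff.Setup
section Aux5
open MeasureTheory ProbabilityTheory Filter
open scoped ENNReal NNReal
variable {Ω : Type*} [MeasurableSpace Ω] {d : ℕ} (E : Setup Ω d)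

lemma integral_cond_eq (A : Set Ω) {f : Ω → ℝ} :
    ∫ ω, f ω ∂(E.μ[|A]) = (E.μ A).toReal⁻¹ * ∫ ω in A, f ω ∂E.μ := by
  rw [ProbabilityTheory.cond, integral_smul_measure, ENNReal.toReal_inv, smul_eq_mul]

lemma integral_wTrt_mul {g : ℕ} (hg : (g:ℕ∞) ∈ E.𝒮) {h : Ω → ℝ} (hh : Integrable h E.μ) :
    ∫ ω, E.wTrt g ω * h ω ∂E.μ = ∫ ω, h ω ∂(E.μ[|E.cell (g:ℕ∞) 1]) := by
  haveI := E.isProb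
  have hrw : (fun ω => E.wTrt g ω * h ω)
      = fun ω => ((E.cell (g:ℕ∞) 1).indicator h ω) * (E.μ (E.cell (g:ℕ∞) 1)).toReal⁻¹ := by
    funext ω
    by_cases hω : ω ∈ E.cell (g:ℕ∞) 1
    · rw [Setup.wTrt, Set.indicator_of_mem hω, Set.indicator_of_mem hω]
      field_simp
    · rw [Setup.wTrt, Set.indicator_of_notMem hω, Set.indicator_of_notMem hω]
      simp
  rw [hrw, integral_mul_const, integral_indicator (E.meas_cell (g:ℕ∞) 1),
    E.integral_cond_eq (E.cell (g:ℕ∞) 1)]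
  ring

lemma integral_wComp_mul (hSO : E.StrongOverlap) {g : ℕ} (hg : (g:ℕ∞) ∈ E.𝒮)
    {g' : ℕ∞} (hg' : g' ∈ E.𝒮) {q' : ℕ} (hq' : q' ≤ 1) (t : ℕ)
    (hΔ : Integrable (fun ω => E.Yobs t ω - E.Yobs (g-1) ω) E.μ) :
    ∫ ω, E.wComp g g' q' ω *
      (E.Yobs t ω - E.Yobs (g-1) ω - E.mReg g t g' q' ω) ∂E.μ = 0 := by
  haveI := E.isProb
  have hm := E.hm_le
  haveI : IsProbabilityMeasure (E.μ[|E.cell g' q']) := E.cond_prob g' hg' q' hq'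
  set ν := E.μ[|E.cell g' q'] with hν
  set φ : Ω → ℝ := fun ω => E.pX (g:ℕ∞) 1 ω / E.pX g' q' ω with hφ
  set m : Ω → ℝ := E.mReg g t g' q' with hmdef
  set Δ : Ω → ℝ := fun ω => E.Yobs t ω - E.Yobs (g-1) ω with hΔdef
  set D : ℝ := ∫ ω, E.oddsW g g' q' ω ∂E.μ with hD
  -- step 1 : rewrite the integrand
  have hrw : (fun ω => E.wComp g g' q' ω * (Δ ω - m ω))
      = fun ω => D⁻¹ * ((E.cell g' q').indicator (fun ω' => φ ω' * (Δ ω' - m ω')) ω) := by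
    funext ω
    by_cases hω : ω ∈ E.cell g' q'
    · rw [Setup.wComp, Setup.oddsW, Set.indicator_of_mem hω, Set.indicator_of_mem hω]
      simp only [one_mul, ← hD]
      rw [hφ]
      ring
    · rw [Setup.wComp, Setup.oddsW, Set.indicator_of_notMem hω, Set.indicator_of_notMem hω]
      simp
  rw [hrw, integral_const_mul, integral_indicator (E.meas_cell g' q')]
  -- step 2 : the set integral is a multiple of the ν-integral
  have hset : ∫ ω in E.cell g' q', φ ω * (Δ ω - m ω) ∂E.μ
      = (E.μ (E.cell g' q')).toReal * ∫ ω, φ ω * (Δ ω - m ω) ∂ν := by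
    rw [E.integral_cond_eq (E.cell g' q'), ← mul_assoc,
      mul_inv_cancel₀ (ENNReal.toReal_pos (E.cell_pos g' hg' q' hq').ne'
        (measure_ne_top _ _)).ne', one_mul]
  -- step 3 : the ν-integral vanishes
  have hφm : StronglyMeasurable[E.mX] φ :=
    ((stronglyMeasurable_condExp.measurable).div
      (stronglyMeasurable_condExp.measurable)).stronglyMeasurable
  obtain ⟨ε, hε, hb⟩ := E.oddsW_bounds hSO hg hg' hq'
  have hφbd : ∀ᵐ ω ∂ν, ‖φ ω‖ ≤ ε⁻¹ := by
    apply E.ae_cond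
    filter_upwards [hb, E.pX_le_one (g:ℕ∞) 1, E.pX_le_one g' q'] with ω hw h3 h4
    obtain ⟨-, -, h1, h2⟩ := hw
    rw [hφ, Real.norm_eq_abs, abs_of_nonneg (div_nonneg (by linarith) (by linarith))]
    rw [div_le_iff₀ (by linarith : (0:ℝ) < E.pX g' q' ω)]
    have h5 : ε * ε⁻¹ = 1 := mul_inv_cancel₀ hε.ne'
    nlinarith
  have hΔν : Integrable Δ ν := E.integrable_cond hΔ (E.cell_pos g' hg' q' hq').ne'
  have hmν : Integrable m ν := integrable_condExp
  have hsub : Integrable (Δ - m) ν := hΔν.sub hmν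
  have h_int : Integrable (φ * (Δ - m)) ν := by
    have := Integrable.bdd_mul (μ := ν) (c := ε⁻¹) hsub
      ((hφm.mono hm).aestronglyMeasurable) hφbd
    exact this
  have hce : ν[φ * (Δ - m)|E.mX] =ᵐ[ν] φ * ν[Δ - m|E.mX] :=
    condExp_mul_of_stronglyMeasurable_left hφm h_int hsub
  have hcd : ν[Δ - m|E.mX] =ᵐ[ν] ν[Δ|E.mX] - ν[m|E.mX] := condExp_sub hΔν hmν E.mX
  have hmfix : ν[m|E.mX] = m :=
    condExp_of_stronglyMeasurable hm stronglyMeasurable_condExp integrable_condExp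
  have hΔfix : ν[Δ|E.mX] = m := rfl
  have hzero : ν[φ * (Δ - m)|E.mX] =ᵐ[ν] 0 := by
    filter_upwards [hce, hcd] with ω e1 e2
    rw [Pi.zero_apply, e1, Pi.mul_apply, e2, Pi.sub_apply, hmfix, hΔfix, sub_self, mul_zero]
  have hint0 : ∫ ω, φ ω * (Δ ω - m ω) ∂ν = 0 := by
    have h1 : ∫ ω, φ ω * (Δ ω - m ω) ∂ν = ∫ ω, (φ * (Δ - m)) ω ∂ν := by
      apply integral_congr_ae
      filter_upwards with ω
      simp [Pi.mul_apply, Pi.sub_apply]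
    rw [h1, ← integral_condExp hm (μ := ν) (f := φ * (Δ - m)), integral_congr_ae hzero]
    simp
  rw [hset, hint0, mul_zero, mul_zero]

end Aux5
end TripleDiff.Setup
namespace TripleDiff.Setup
section Aux6
open MeasureTheory ProbabilityTheory Filter
open scoped ENNReal NNReal
variable {Ω : Type*} [MeasurableSpace Ω] {d : ℕ} (E : Setup Ω d)

lemma integrable_mReg_mu (hSO : E.StrongOverlap) {g' : ℕ∞} (hg' : g' ∈ E.𝒮) {q' : ℕ}
    (hq' : q' ≤ 1) (g t : ℕ) : Integrable (E.mReg g t g' q') E.μ :=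
  E.integrable_of_cell_integrable hSO hg' hq' stronglyMeasurable_condExp integrable_condExp

lemma measurable_wTrt (g : ℕ) : Measurable (E.wTrt g) := by
  have m1 : Measurable ((E.cell (g:ℕ∞) 1).indicator (fun _ => (1:ℝ))) :=
    measurable_const.indicator (E.meas_cell (g:ℕ∞) 1)
  exact m1.div_const _

lemma wTrt_bound (g : ℕ) : ∀ ω, ‖E.wTrt g ω‖ ≤ (E.μ (E.cell (g:ℕ∞) 1)).toReal⁻¹ := by
  intro ω
  rw [Setup.wTrt, Real.norm_eq_abs]
  by_cases hω : ω ∈ E.cell (g:ℕ∞) 1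
  · rw [Set.indicator_of_mem hω, abs_of_nonneg (by positivity), ← one_div, one_div]
  · rw [Set.indicator_of_notMem hω, zero_div, abs_zero]
    positivity

lemma attdr_term (hSO : E.StrongOverlap) {g : ℕ} (hg : (g:ℕ∞) ∈ E.𝒮)
    {g' : ℕ∞} (hg' : g' ∈ E.𝒮) {q' : ℕ} (hq' : q' ≤ 1) (t : ℕ)
    (hΔ : Integrable (fun ω => E.Yobs t ω - E.Yobs (g-1) ω) E.μ) :
    ∫ ω, (E.wTrt g ω - E.wComp g g' q' ω) *
        (E.Yobs t ω - E.Yobs (g-1) ω - E.mReg g t g' q' ω) ∂E.μ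
      = ∫ ω, (E.Yobs t ω - E.Yobs (g-1) ω - E.mReg g t g' q' ω) ∂(E.μ[|E.cell (g:ℕ∞) 1]) := by
  haveI := E.isProb
  set m : Ω → ℝ := E.mReg g t g' q' with hmdef
  have hmμ : Integrable m E.μ := E.integrable_mReg_mu hSO hg' hq' g t
  have hdiff : Integrable (fun ω => E.Yobs t ω - E.Yobs (g-1) ω - m ω) E.μ := hΔ.sub hmμ
  obtain ⟨ε, hε, hb⟩ := E.oddsW_bounds hSO hg hg' hq'
  set D : ℝ := ∫ ω, E.oddsW g g' q' ω ∂E.μ with hD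
  have hDpos : 0 < D := E.oddsW_integral_pos hSO hg hg' hq'
  have h1 : Integrable (fun ω => E.wTrt g ω *
      (E.Yobs t ω - E.Yobs (g-1) ω - m ω)) E.μ :=
    Integrable.bdd_mul hdiff (E.measurable_wTrt g).aestronglyMeasurable
      (Filter.Eventually.of_forall (E.wTrt_bound g))
  have h2 : Integrable (fun ω => E.wComp g g' q' ω *
      (E.Yobs t ω - E.Yobs (g-1) ω - m ω)) E.μ := by
    refine Integrable.bdd_mul (c := ε⁻¹ / D) hdiff ?_ ?_
    · exact ((E.measurable_oddsW g g' q').div_const D).aestronglyMeasurable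
    · filter_upwards [hb] with ω hw
      obtain ⟨hlo, hhi, -, -⟩ := hw
      have h0 : (0:ℝ) ≤ E.oddsW g g' q' ω := by
        refine le_trans ?_ hlo
        by_cases hω : ω ∈ E.cell g' q'
        · rw [Set.indicator_of_mem hω]; positivity
        · rw [Set.indicator_of_notMem hω]; simp
      rw [Setup.wComp, ← hD, Real.norm_eq_abs, abs_of_nonneg (by positivity)]
      exact div_le_div_of_nonneg_right hhi hDpos.le
  have hsplit : ∫ ω, (E.wTrt g ω - E.wComp g g' q' ω) *
      (E.Yobs t ω - E.Yobs (g-1) ω - m ω) ∂E.μ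
      = (∫ ω, E.wTrt g ω * (E.Yobs t ω - E.Yobs (g-1) ω - m ω) ∂E.μ)
        - ∫ ω, E.wComp g g' q' ω * (E.Yobs t ω - E.Yobs (g-1) ω - m ω) ∂E.μ := by
    rw [← integral_sub h1 h2]
    apply integral_congr_ae
    filter_upwards with ω
    ring
  rw [hsplit, E.integral_wComp_mul hSO hg hg' hq' t hΔ, sub_zero,
    E.integral_wTrt_mul hg hdiff]

end Aux6
end TripleDiff.Setup
namespace TripleDiff.Setup
section Aux7
open MeasureTheory ProbabilityTheory Filter
open scoped ENNReal NNReal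
variable {Ω : Type*} [MeasurableSpace Ω] {d : ℕ} (E : Setup Ω d)

lemma telescope_sum (F : ℕ → ℝ) (g : ℕ) (hg : 1 ≤ g) :
    ∀ t, g ≤ t → ∑ s ∈ Finset.Icc g t, (F s - F (s-1)) = F t - F (g-1) := by
  intro t
  induction t with
  | zero => intro h; omega
  | succ n ih =>
    intro h
    rcases Nat.lt_or_ge g (n+1) with hlt | hge
    · have hgn : g ≤ n := Nat.lt_succ_iff.mp hlt
      rw [← Finset.insert_Icc_right_eq_Icc_add_one (hgn.trans (Nat.le_succ n)), Finset.sum_insert (by simp), ih hgn]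
      simp only [Nat.add_sub_cancel]
      ring
    · have : g = n + 1 := le_antisymm h hge
      subst this
      simp

/-- on a `q = 0` cell the observed outcome is the never-treated potential outcome -/
lemma Yobs_eq_on_cell_zero (g' : ℕ∞) (t : ℕ) {ω : Ω} (hω : ω ∈ E.cell g' 0) :
    E.Yobs t ω = E.Ypo ⊤ t ω := by
  obtain ⟨hS, hQ⟩ := hω
  rw [Setup.Yobs, Setup.G]
  rw [if_neg (by rw [hQ]; exact zero_ne_one)]

/-- on a `q = 1` cell the observed outcome is the `g'`-potential outcome -/
lemma Yobs_eq_on_cell_one (g' : ℕ∞) (t : ℕ) {ω : Ω} (hω : ω ∈ E.cell g' 1) :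
    E.Yobs t ω = E.Ypo g' t ω := by
  obtain ⟨hS, hQ⟩ := hω
  rw [Setup.Yobs, Setup.G, if_pos hQ, hS]

/-- `mReg` on a `q = 0` cell is the conditional expectation of the untreated contrast -/
lemma mReg_zero_eq (hSO : E.StrongOverlap) {g' : ℕ∞} (hg' : g' ∈ E.𝒮) (g t : ℕ) :
    E.mReg g t g' 0 =ᵐ[E.μ]
      ((E.μ)[|E.cell g' 0])[(fun ω => E.Ypo ⊤ t ω - E.Ypo ⊤ (g-1) ω)|E.mX] := by
  have heq : (fun ω => E.Yobs t ω - E.Yobs (g-1) ω)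
      =ᵐ[E.μ[|E.cell g' 0]] (fun ω => E.Ypo ⊤ t ω - E.Ypo ⊤ (g-1) ω) := by
    filter_upwards [E.ae_cond_mem (E.meas_cell g' 0)] with ω hω
    rw [E.Yobs_eq_on_cell_zero g' t hω, E.Yobs_eq_on_cell_zero g' (g-1) hω]
  exact E.ae_of_cell_ae hSO hg' (Nat.zero_le 1)
    stronglyMeasurable_condExp stronglyMeasurable_condExp (condExp_congr_ae heq)

end Aux7
end TripleDiff.Setup
namespace TripleDiff.Setup
section Aux8
open MeasureTheory ProbabilityTheory Filter
open scoped ENNReal NNReal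
variable {Ω : Type*} [MeasurableSpace Ω] {d : ℕ} (E : Setup Ω d)

/-- `mReg` on the comparison `q = 1` cell, via no-anticipation -/
lemma mReg_one_eq (hSO : E.StrongOverlap) (hNA : E.NoAnticipation)
    {gc : ℕ∞} (hgc : gc ∈ E.𝒮) {g t : ℕ} (hg2 : 2 ≤ g) (hgt : g ≤ t) (htT : t ≤ E.T)
    (hlt : (t:ℕ∞) < gc) :
    E.mReg g t gc 1 =ᵐ[E.μ]
      ((E.μ)[|E.cell gc 1])[(fun ω => E.Ypo ⊤ t ω - E.Ypo ⊤ (g-1) ω)|E.mX] := by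
  haveI := E.isProb
  set ν := (E.μ)[|E.cell gc 1] with hν
  have hν0 : E.μ (E.cell gc 1) ≠ 0 := (E.cell_pos gc hgc 1 le_rfl).ne'
  have step1 : E.mReg g t gc 1 =ᵐ[E.μ]
      ν[(fun ω => E.Ypo gc t ω - E.Ypo gc (g-1) ω)|E.mX] := by
    have heq : (fun ω => E.Yobs t ω - E.Yobs (g-1) ω)
        =ᵐ[ν] (fun ω => E.Ypo gc t ω - E.Ypo gc (g-1) ω) := by
      filter_upwards [E.ae_cond_mem (E.meas_cell gc 1)] with ω hω
      rw [E.Yobs_eq_on_cell_one gc t hω, E.Yobs_eq_on_cell_one gc (g-1) hω]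
    exact E.ae_of_cell_ae hSO hgc le_rfl
      stronglyMeasurable_condExp stronglyMeasurable_condExp (condExp_congr_ae heq)
  rcases eq_or_ne gc ⊤ with htop | hne
  · subst htop; exact step1
  · obtain ⟨n, hn2, hnT, hgcn⟩ := E.h𝒮 gc hgc hne
    subst hgcn
    have htn : t < n := by exact_mod_cast hlt
    have hg1n : g - 1 < n := by omega
    have ht1 : 1 ≤ t := by omega
    have hg11 : 1 ≤ g - 1 := by omega
    have hg1T : g - 1 ≤ E.T := by omega
    have hint1 : Integrable (E.Ypo (n:ℕ∞) t) ν :=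
      E.integrable_cond (E.hYpo _ hgc t ht1 htT) hν0
    have hint2 : Integrable (E.Ypo (n:ℕ∞) (g-1)) ν :=
      E.integrable_cond (E.hYpo _ hgc (g-1) hg11 hg1T) hν0
    have hint3 : Integrable (E.Ypo ⊤ t) ν :=
      E.integrable_cond (E.hYpo ⊤ E.htop t ht1 htT) hν0
    have hint4 : Integrable (E.Ypo ⊤ (g-1)) ν :=
      E.integrable_cond (E.hYpo ⊤ E.htop (g-1) hg11 hg1T) hν0
    have hsub1 : ν[(fun ω => E.Ypo (n:ℕ∞) t ω - E.Ypo (n:ℕ∞) (g-1) ω)|E.mX]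
        =ᵐ[E.μ] fun ω => (ν[E.Ypo (n:ℕ∞) t|E.mX]) ω - (ν[E.Ypo (n:ℕ∞) (g-1)|E.mX]) ω := by
      refine E.ae_of_cell_ae hSO hgc le_rfl stronglyMeasurable_condExp
        (stronglyMeasurable_condExp.sub stronglyMeasurable_condExp) ?_
      exact (condExp_sub hint1 hint2 E.mX)
    have hsub2 : (fun ω => (ν[E.Ypo ⊤ t|E.mX]) ω - (ν[E.Ypo ⊤ (g-1)|E.mX]) ω)
        =ᵐ[E.μ] ν[(fun ω => E.Ypo ⊤ t ω - E.Ypo ⊤ (g-1) ω)|E.mX] := by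
      refine E.ae_of_cell_ae hSO hgc le_rfl
        (stronglyMeasurable_condExp.sub stronglyMeasurable_condExp)
        stronglyMeasurable_condExp ?_
      exact (condExp_sub hint3 hint4 E.mX).symm
    have hna1 := hNA n hgc t ht1 htn
    have hna2 := hNA n hgc (g-1) hg11 hg1n
    refine step1.trans (hsub1.trans ((?_ : _ =ᵐ[E.μ] _).trans hsub2))
    filter_upwards [hna1, hna2] with ω h1 h2
    rw [← hν] at h1 h2
    rw [h1, h2]

/-- conditional expectation of the long difference telescopes into period contrasts -/
lemma condexp_base_sum (hSO : E.StrongOverlap) {g' : ℕ∞} (hg' : g' ∈ E.𝒮) {q' : ℕ} (hq' : q' ≤ 1)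
    {g t : ℕ} (hg2 : 2 ≤ g) (hgt : g ≤ t) (htT : t ≤ E.T) :
    ((E.μ)[|E.cell g' q'])[(fun ω => E.Ypo ⊤ t ω - E.Ypo ⊤ (g-1) ω)|E.mX]
      =ᵐ[E.μ] fun ω => ∑ s ∈ Finset.Icc g t,
        (((E.μ)[|E.cell g' q'])[(fun ω' => E.Ypo ⊤ s ω' - E.Ypo ⊤ (s-1) ω')|E.mX]) ω := by
  haveI := E.isProb
  set ν := (E.μ)[|E.cell g' q'] with hν
  have hν0 : E.μ (E.cell g' q') ≠ 0 := (E.cell_pos g' hg' q' hq').ne'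
  have hbase : (fun ω => E.Ypo ⊤ t ω - E.Ypo ⊤ (g-1) ω)
      = ∑ s ∈ Finset.Icc g t, (fun ω' => E.Ypo ⊤ s ω' - E.Ypo ⊤ (s-1) ω') := by
    funext ω
    rw [Finset.sum_apply]
    exact (telescope_sum (fun s => E.Ypo ⊤ s ω) g (by omega) t hgt).symm
  have hint : ∀ s ∈ Finset.Icc g t,
      Integrable (fun ω' => E.Ypo ⊤ s ω' - E.Ypo ⊤ (s-1) ω') ν := by
    intro s hs
    rw [Finset.mem_Icc] at hs
    exact E.integrable_cond ((E.hYpo ⊤ E.htop s (by omega) (by omega)).sub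
      (E.hYpo ⊤ E.htop (s-1) (by omega) (by omega))) hν0
  have hcs := condExp_finset_sum (μ := ν) (m := E.mX) hint
  rw [hbase]
  refine E.ae_of_cell_ae hSO hg' hq' stronglyMeasurable_condExp
    (Finset.stronglyMeasurable_fun_sum (M := ℝ) _ (fun s _ => stronglyMeasurable_condExp)) ?_
  exact hcs.trans (Filter.Eventually.of_forall (fun ω => by rw [Finset.sum_apply]))
end Aux8
end TripleDiff.Setup
namespace TripleDiff.Setup
section Aux9
open MeasureTheory ProbabilityTheory Filter
open scoped ENNReal NNReal
variable {Ω : Type*} [MeasurableSpace Ω] {d : ℕ} (E : Setup Ω d)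

/-- DDD parallel trends, telescoped to the long difference -/
lemma pt_combine (hSO : E.StrongOverlap) (hPT : E.ParallelTrends)
    {g : ℕ} (hg : (g:ℕ∞) ∈ E.𝒮) {gc : ℕ∞} (hgc : gc ∈ E.𝒮)
    {t : ℕ} (hg2 : 2 ≤ g) (hgt : g ≤ t) (htT : t ≤ E.T) (hlt : (t:ℕ∞) < gc) :
    (fun ω => (((E.μ)[|E.cell (g:ℕ∞) 1])[(fun ω' => E.Ypo ⊤ t ω' - E.Ypo ⊤ (g-1) ω')|E.mX]) ω
        - (((E.μ)[|E.cell (g:ℕ∞) 0])[(fun ω' => E.Ypo ⊤ t ω' - E.Ypo ⊤ (g-1) ω')|E.mX]) ω)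
      =ᵐ[E.μ]
    (fun ω => (((E.μ)[|E.cell gc 1])[(fun ω' => E.Ypo ⊤ t ω' - E.Ypo ⊤ (g-1) ω')|E.mX]) ω
        - (((E.μ)[|E.cell gc 0])[(fun ω' => E.Ypo ⊤ t ω' - E.Ypo ⊤ (g-1) ω')|E.mX]) ω) := by
  haveI := E.isProb
  have hPTs : ∀ᵐ ω ∂E.μ, ∀ s : ℕ, s ∈ Finset.Icc g t →
      (((E.μ)[|E.cell (g:ℕ∞) 1])[(fun ω' => E.Ypo ⊤ s ω' - E.Ypo ⊤ (s-1) ω')|E.mX]) ω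
        - (((E.μ)[|E.cell (g:ℕ∞) 0])[(fun ω' => E.Ypo ⊤ s ω' - E.Ypo ⊤ (s-1) ω')|E.mX]) ω
      = (((E.μ)[|E.cell gc 1])[(fun ω' => E.Ypo ⊤ s ω' - E.Ypo ⊤ (s-1) ω')|E.mX]) ω
        - (((E.μ)[|E.cell gc 0])[(fun ω' => E.Ypo ⊤ s ω' - E.Ypo ⊤ (s-1) ω')|E.mX]) ω := by
    rw [ae_all_iff]
    intro s
    by_cases hs : s ∈ Finset.Icc g t
    · rw [Finset.mem_Icc] at hs
      have hmax : max (g:ℕ∞) (s:ℕ∞) < gc := by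
        apply max_lt
        · exact lt_of_le_of_lt (by exact_mod_cast hgt) hlt
        · exact lt_of_le_of_lt (by exact_mod_cast hs.2) hlt
      have h := hPT g hg gc hgc s hs.1 (le_trans hs.2 htT) hmax
      filter_upwards [h] with ω hω _
      exact hω
    · exact Filter.Eventually.of_forall (fun ω hmem => absurd hmem hs)
  have e1 := E.condexp_base_sum hSO hg (q' := 1) le_rfl hg2 hgt htT
  have e2 := E.condexp_base_sum hSO hg (q' := 0) (Nat.zero_le 1) hg2 hgt htT
  have e3 := E.condexp_base_sum hSO hgc (q' := 1) le_rfl hg2 hgt htT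
  have e4 := E.condexp_base_sum hSO hgc (q' := 0) (Nat.zero_le 1) hg2 hgt htT
  filter_upwards [hPTs, e1, e2, e3, e4] with ω hs h1 h2 h3 h4
  rw [h1, h2, h3, h4, ← Finset.sum_sub_distrib, ← Finset.sum_sub_distrib]
  exact Finset.sum_congr rfl (fun s hsmem => hs s hsmem)

/-- the doubly robust combination of regression adjustments identifies the treated-cell
conditional expectation of the untreated long difference -/
lemma mReg_combination (hSO : E.StrongOverlap) (hNA : E.NoAnticipation)
    (hPT : E.ParallelTrends) {g : ℕ} (hg : (g:ℕ∞) ∈ E.𝒮) {gc : ℕ∞} (hgc : gc ∈ E.𝒮)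
    {t : ℕ} (hg2 : 2 ≤ g) (hgt : g ≤ t) (htT : t ≤ E.T) (hlt : (t:ℕ∞) < gc) :
    (fun ω => E.mReg g t (g:ℕ∞) 0 ω + E.mReg g t gc 1 ω - E.mReg g t gc 0 ω)
      =ᵐ[E.μ]
      ((E.μ)[|E.cell (g:ℕ∞) 1])[(fun ω => E.Ypo ⊤ t ω - E.Ypo ⊤ (g-1) ω)|E.mX] := by
  have h1 := E.mReg_zero_eq hSO hg g t
  have h2 := E.mReg_one_eq hSO hNA hgc hg2 hgt htT hlt
  have h3 := E.mReg_zero_eq hSO hgc g t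
  have h4 := E.pt_combine hSO hPT hg hgc hg2 hgt htT hlt
  filter_upwards [h1, h2, h3, h4] with ω e1 e2 e3 e4
  rw [e1, e2, e3]
  linarith [e4]

end Aux9
end TripleDiff.Setup
namespace TripleDiff.Setup
section Aux10
open MeasureTheory ProbabilityTheory Filter
open scoped ENNReal NNReal
variable {Ω : Type*} [MeasurableSpace Ω] {d : ℕ} (E : Setup Ω d)

/-- **Doubly robust identification** of the group-time ATT. -/
lemma attdr_eq_att (hSO : E.StrongOverlap) (hNA : E.NoAnticipation) (hPT : E.ParallelTrends)
    {g : ℕ} (hg : (g:ℕ∞) ∈ E.𝒮) (hg2 : 2 ≤ g) {t : ℕ} (hgt : g ≤ t) (htT : t ≤ E.T)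
    {gc : ℕ∞} (hgc : gc ∈ E.𝒮) (hlt : (t:ℕ∞) < gc) :
    E.ATTdr g t gc = E.ATT g t := by
  haveI := E.isProb
  have hm := E.hm_le
  set ν := (E.μ)[|E.cell (g:ℕ∞) 1] with hν
  haveI : IsProbabilityMeasure ν := E.cond_prob (g:ℕ∞) hg 1 le_rfl
  have hν0 : E.μ (E.cell (g:ℕ∞) 1) ≠ 0 := (E.cell_pos (g:ℕ∞) hg 1 le_rfl).ne'
  have ht1 : 1 ≤ t := by omega
  have hg11 : 1 ≤ g - 1 := by omega
  have hg1T : g - 1 ≤ E.T := by omega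
  have hΔ : Integrable (fun ω => E.Yobs t ω - E.Yobs (g-1) ω) E.μ :=
    (E.integrable_Yobs t ht1 htT).sub (E.integrable_Yobs (g-1) hg11 hg1T)
  have hΔν : Integrable (fun ω => E.Yobs t ω - E.Yobs (g-1) ω) ν := E.integrable_cond hΔ hν0
  have hm1ν : Integrable (E.mReg g t (g:ℕ∞) 0) ν :=
    E.integrable_cond (E.integrable_mReg_mu hSO hg (Nat.zero_le 1) g t) hν0
  have hm2ν : Integrable (E.mReg g t gc 1) ν :=
    E.integrable_cond (E.integrable_mReg_mu hSO hgc le_rfl g t) hν0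
  have hm3ν : Integrable (E.mReg g t gc 0) ν :=
    E.integrable_cond (E.integrable_mReg_mu hSO hgc (Nat.zero_le 1) g t) hν0
  -- potential outcome integrability under ν
  have hYg_t : Integrable (E.Ypo (g:ℕ∞) t) ν := E.integrable_cond (E.hYpo _ hg t ht1 htT) hν0
  have hYg_1 : Integrable (E.Ypo (g:ℕ∞) (g-1)) ν :=
    E.integrable_cond (E.hYpo _ hg (g-1) hg11 hg1T) hν0
  have hYi_t : Integrable (E.Ypo ⊤ t) ν := E.integrable_cond (E.hYpo ⊤ E.htop t ht1 htT) hν0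
  have hYi_1 : Integrable (E.Ypo ⊤ (g-1)) ν :=
    E.integrable_cond (E.hYpo ⊤ E.htop (g-1) hg11 hg1T) hν0
  -- step 1 : each DR term reduces to a ν-integral
  rw [Setup.ATTdr,
    E.attdr_term hSO hg hg (Nat.zero_le 1) t hΔ,
    E.attdr_term hSO hg hgc le_rfl t hΔ,
    E.attdr_term hSO hg hgc (Nat.zero_le 1) t hΔ]
  -- step 2 : split integrals
  have hs1 : ∫ ω, (E.Yobs t ω - E.Yobs (g-1) ω - E.mReg g t (g:ℕ∞) 0 ω) ∂ν
      = (∫ ω, (E.Yobs t ω - E.Yobs (g-1) ω) ∂ν) - ∫ ω, E.mReg g t (g:ℕ∞) 0 ω ∂ν :=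
    integral_sub hΔν hm1ν
  have hs2 : ∫ ω, (E.Yobs t ω - E.Yobs (g-1) ω - E.mReg g t gc 1 ω) ∂ν
      = (∫ ω, (E.Yobs t ω - E.Yobs (g-1) ω) ∂ν) - ∫ ω, E.mReg g t gc 1 ω ∂ν :=
    integral_sub hΔν hm2ν
  have hs3 : ∫ ω, (E.Yobs t ω - E.Yobs (g-1) ω - E.mReg g t gc 0 ω) ∂ν
      = (∫ ω, (E.Yobs t ω - E.Yobs (g-1) ω) ∂ν) - ∫ ω, E.mReg g t gc 0 ω ∂ν :=
    integral_sub hΔν hm3ν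
  -- step 3 : the regression adjustments identify the untreated long difference
  have hae : (fun ω => E.mReg g t (g:ℕ∞) 0 ω + E.mReg g t gc 1 ω - E.mReg g t gc 0 ω)
      =ᵐ[ν] ν[(fun ω => E.Ypo ⊤ t ω - E.Ypo ⊤ (g-1) ω)|E.mX] :=
    E.ae_cond _ (E.mReg_combination hSO hNA hPT hg hgc hg2 hgt htT hlt)
  have heq1 : ∫ ω, (E.mReg g t (g:ℕ∞) 0 ω + E.mReg g t gc 1 ω - E.mReg g t gc 0 ω) ∂ν
      = ∫ ω, (E.Ypo ⊤ t ω - E.Ypo ⊤ (g-1) ω) ∂ν := by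
    rw [integral_congr_ae hae, integral_condExp hm]
  have hsplit1 : ∫ ω, (E.mReg g t (g:ℕ∞) 0 ω + E.mReg g t gc 1 ω - E.mReg g t gc 0 ω) ∂ν
      = (∫ ω, (E.mReg g t (g:ℕ∞) 0 ω + E.mReg g t gc 1 ω) ∂ν) - ∫ ω, E.mReg g t gc 0 ω ∂ν :=
    integral_sub (hm1ν.add hm2ν) hm3ν
  have hsplit2 : ∫ ω, (E.mReg g t (g:ℕ∞) 0 ω + E.mReg g t gc 1 ω) ∂ν
      = (∫ ω, E.mReg g t (g:ℕ∞) 0 ω ∂ν) + ∫ ω, E.mReg g t gc 1 ω ∂ν :=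
    integral_add hm1ν hm2ν
  -- step 4 : observed outcomes on the treated cell
  have hobs : ∫ ω, (E.Yobs t ω - E.Yobs (g-1) ω) ∂ν
      = ∫ ω, (E.Ypo (g:ℕ∞) t ω - E.Ypo (g:ℕ∞) (g-1) ω) ∂ν := by
    apply integral_congr_ae
    filter_upwards [E.ae_cond_mem (E.meas_cell (g:ℕ∞) 1)] with ω hω
    rw [E.Yobs_eq_on_cell_one _ t hω, E.Yobs_eq_on_cell_one _ (g-1) hω]
  -- step 5 : no anticipation at the base period
  have hna : ∫ ω, E.Ypo (g:ℕ∞) (g-1) ω ∂ν = ∫ ω, E.Ypo ⊤ (g-1) ω ∂ν := by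
    have h := hNA g hg (g-1) hg11 (by omega)
    have h' : ν[E.Ypo (g:ℕ∞) (g-1)|E.mX] =ᵐ[ν] ν[E.Ypo ⊤ (g-1)|E.mX] := E.ae_cond _ h
    rw [← integral_condExp hm (f := E.Ypo (g:ℕ∞) (g-1)), integral_congr_ae h',
      integral_condExp hm]
  -- remaining expansions
  have hY1 : ∫ ω, (E.Ypo (g:ℕ∞) t ω - E.Ypo (g:ℕ∞) (g-1) ω) ∂ν
      = (∫ ω, E.Ypo (g:ℕ∞) t ω ∂ν) - ∫ ω, E.Ypo (g:ℕ∞) (g-1) ω ∂ν :=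
    integral_sub hYg_t hYg_1
  have hY2 : ∫ ω, (E.Ypo ⊤ t ω - E.Ypo ⊤ (g-1) ω) ∂ν
      = (∫ ω, E.Ypo ⊤ t ω ∂ν) - ∫ ω, E.Ypo ⊤ (g-1) ω ∂ν :=
    integral_sub hYi_t hYi_1
  have hATT : E.ATT g t = (∫ ω, E.Ypo (g:ℕ∞) t ω ∂ν) - ∫ ω, E.Ypo ⊤ t ω ∂ν := by
    rw [Setup.ATT, ← hν]
    exact integral_sub hYg_t hYi_t
  rw [hs1, hs2, hs3, hATT]
  linarith [heq1, hsplit1, hsplit2, hobs, hna, hY1, hY2]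

end Aux10
end TripleDiff.Setup
/-- **Event-study identification (Remark 3).**
Under Assumptions SO, NA, and DDD-CPT, for any event time `e ≥ 0` with
`P(G + e ∈ [2,T]) > 0` and any selection `g ↦ g_c(g) ∈ 𝒮` with `g_c(g) > g + e`
for each treated group `g` with `g + e ≤ T`, the event-study parameter
`ES(e) = E[ATT(G, G+e) | G + e ∈ [2,T]]` satisfies
`ES(e) = Σ_{g ∈ 𝒢_trt, g+e ≤ T} P(G = g | G + e ∈ [2,T]) · ATT_dr,g_c(g)(g, g+e)`. -/
theorem event_study_identification {Ω : Type*} [MeasurableSpace Ω] {d : ℕ}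
    (E : Setup Ω d)
    (hSO : E.StrongOverlap) (hNA : E.NoAnticipation) (hPT : E.ParallelTrends)
    (e : ℕ)
    (hpos : 0 < E.μ {ω | (2 : ℕ∞) ≤ E.G ω + (e : ℕ∞) ∧ E.G ω + (e : ℕ∞) ≤ (E.T : ℕ∞)})
    (gcSel : ℕ → ℕ∞)
    (hsel : ∀ g : ℕ, (g : ℕ∞) ∈ E.𝒮 → g + e ≤ E.T →
      gcSel g ∈ E.𝒮 ∧ ((g + e : ℕ) : ℕ∞) < gcSel g)
    (Gs : Finset ℕ)
    (hGs : ∀ g : ℕ, g ∈ Gs ↔ (g : ℕ∞) ∈ E.𝒮 ∧ g + e ≤ E.T) :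
    (∫ ω, E.ATT (E.G ω).toNat ((E.G ω).toNat + e)
        ∂((E.μ)[|{ω | (2 : ℕ∞) ≤ E.G ω + (e : ℕ∞) ∧ E.G ω + (e : ℕ∞) ≤ (E.T : ℕ∞)}]))
      = ∑ g ∈ Gs,
          (((E.μ)[|{ω | (2 : ℕ∞) ≤ E.G ω + (e : ℕ∞) ∧ E.G ω + (e : ℕ∞) ≤ (E.T : ℕ∞)}])
              {ω | E.G ω = (g : ℕ∞)}).toReal
            * E.ATTdr g (g + e) (gcSel g) := by

  haveI := E.isProb
  set A : Set Ω := {ω | (2 : ℕ∞) ≤ E.G ω + (e : ℕ∞) ∧ E.G ω + (e : ℕ∞) ≤ (E.T : ℕ∞)} with hA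
  have hAmeas : MeasurableSet A := by
    have : A = E.G ⁻¹' {x : ℕ∞ | (2:ℕ∞) ≤ x + e ∧ x + e ≤ (E.T:ℕ∞)} := rfl
    rw [this]
    exact E.measurable_G (Set.to_countable _).measurableSet
  haveI : IsProbabilityMeasure (E.μ[|A]) := cond_isProbabilityMeasure hpos.ne'
  -- a.e. rewrite of the integrand as a finite sum of indicators
  have hae : ∀ᵐ ω ∂(E.μ[|A]), E.ATT (E.G ω).toNat ((E.G ω).toNat + e)
      = ∑ g ∈ Gs, ({ω' | E.G ω' = (g:ℕ∞)}).indicator (fun _ => E.ATT g (g+e)) ω := by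
    filter_upwards [E.ae_cond_mem hAmeas] with ω hω
    obtain ⟨h2, hT⟩ := hω
    have hne : E.G ω ≠ ⊤ := by
      intro hc
      rw [hc] at hT
      simp at hT
    have hn : (((E.G ω).toNat : ℕ) : ℕ∞) = E.G ω := ENat.coe_toNat hne
    set n := (E.G ω).toNat with hndef
    have hQ1 : E.Q ω = 1 := by
      by_contra hc
      apply hne
      rw [Setup.G, if_neg hc]
    have hGS : E.G ω = E.S ω := by rw [Setup.G, if_pos hQ1]
    have hmem : (n:ℕ∞) ∈ E.𝒮 := by rw [hn, hGS]; exact E.hSmem ω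
    have hneT : n + e ≤ E.T := by
      have h' : ((n+e:ℕ):ℕ∞) ≤ (E.T:ℕ∞) := by rw [Nat.cast_add, hn]; exact hT
      exact_mod_cast h'
    have hnGs : n ∈ Gs := (hGs n).mpr ⟨hmem, hneT⟩
    rw [Finset.sum_eq_single_of_mem n hnGs]
    · rw [Set.indicator_of_mem (show ω ∈ {ω' | E.G ω' = (n:ℕ∞)} from hn.symm)]
    · intro b _ hb
      apply Set.indicator_of_notMem
      intro hc
      have : (n:ℕ∞) = (b:ℕ∞) := by rw [hn]; exact hc
      have hnb : n = b := by exact_mod_cast this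
      exact hb hnb.symm
  rw [integral_congr_ae hae, integral_finset_sum _ (fun g _ =>
    (integrable_const (E.ATT g (g+e))).indicator
      (show MeasurableSet {ω' | E.G ω' = (g:ℕ∞)} from
        E.measurable_G (measurableSet_singleton _)))]
  refine Finset.sum_congr rfl (fun g hgmem => ?_)
  obtain ⟨hmem, hge⟩ := (hGs g).mp hgmem
  rw [integral_indicator_const (E.ATT g (g+e))
    (show MeasurableSet {ω' | E.G ω' = (g:ℕ∞)} from
      E.measurable_G (measurableSet_singleton _)), smul_eq_mul, measureReal_def]
  -- identification for this group
  obtain ⟨hgcS, hgclt⟩ := hsel g hmem hge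
  have hg2 : 2 ≤ g := by
    obtain ⟨m, hm2, hmT, hgm⟩ := E.h𝒮 (g:ℕ∞) hmem (by simp)
    have : g = m := by exact_mod_cast hgm
    omega
  rw [E.attdr_eq_att hSO hNA hPT hmem hg2 (Nat.le_add_right g e) hge hgcS
    (by exact_mod_cast hgclt)]
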